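/- For all -1 ≤ y_{c1} < y_{c2} ≤ 1, the variance of the conditional expectation E[1_{C(y_{c1},y_{c2})}(Y) | X1] equals (|y_{c2}| - |y_{c1}|)^2/4. -/

import Mathlib

open MeasureTheory ProbabilityTheory Set

/-- The uniform probability measure on the square [-1,1] × [-1,1]. -/
noncomputable def unifSq : Measure (ℝ × ℝ) :=
  (4 : ENNReal)⁻¹ •
    ((volume.restrict (Icc (-1 : ℝ) 1)).prod (volume.restrict (Icc (-1 : ℝ) 1)))

/-- sign(x) = 1 if x ≥ 0 and -1 if x < 0. -/
noncomputable def sgn (x : ℝ) : ℝ := if 0 ≤ x then 1 else -1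

/-- The model output Y = sign(X1)·|X2|. -/
noncomputable def Ymod (ω : ℝ × ℝ) : ℝ := sgn ω.1 * |ω.2|

/-- The membership indicator 1_C(Y). -/
noncomputable def indC (C : Set ℝ) (ω : ℝ × ℝ) : ℝ := C.indicator 1 (Ymod ω)

/-- Region-based first-order Sobol' index of input X (given as a coordinate map)
for the region C : Var(E[1_C(Y) | X]) / Var(1_C(Y)). -/
noncomputable def SIdx (X : ℝ × ℝ → ℝ) (C : Set ℝ) : ℝ :=
  variance (unifSq[indC C | MeasurableSpace.comap X inferInstance]) unifSq /
    variance (indC C) unifSq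

/-! ### Auxiliary definitions and lemmas -/

/-- The uniform probability measure on `[-1,1]`. -/
noncomputable def Pm : Measure ℝ := (2 : ENNReal)⁻¹ • (volume.restrict (Icc (-1 : ℝ) 1))

lemma Pm_apply (s : Set ℝ) (hs : MeasurableSet s) :
    Pm s = 2⁻¹ * volume (s ∩ Icc (-1 : ℝ) 1) := by
  simp [Pm, Measure.smul_apply, Measure.restrict_apply hs, smul_eq_mul]

instance : IsProbabilityMeasure Pm := by
  constructor
  rw [Pm_apply _ MeasurableSet.univ, Set.univ_inter, Real.volume_Icc]
  have h2 : ENNReal.ofReal (1 - (-1:ℝ)) = 2 := by norm_num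
  rw [h2]
  exact ENNReal.inv_mul_cancel two_ne_zero ENNReal.ofNat_ne_top

lemma unifSq_eq : unifSq = Pm.prod Pm := by
  refine (Measure.prod_eq fun s t hs ht => ?_).symm
  have h4 : (4 : ENNReal)⁻¹ = 2⁻¹ * 2⁻¹ := by
    rw [← ENNReal.mul_inv (Or.inl two_ne_zero) (Or.inl ENNReal.ofNat_ne_top)]
    norm_num
  simp only [unifSq, Measure.smul_apply, Measure.prod_prod, smul_eq_mul, Pm,
    Measure.coe_smul, Pi.smul_apply, h4]
  ring

instance : IsProbabilityMeasure unifSq := by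
  rw [unifSq_eq]; infer_instance

lemma absSet_measurable (u v : ℝ) : MeasurableSet {x : ℝ | u ≤ |x| ∧ |x| ≤ v} := by
  have : {x : ℝ | u ≤ |x| ∧ |x| ≤ v} = (fun x : ℝ => |x|) ⁻¹' Icc u v := by
    ext x; simp [mem_Icc]
  rw [this]
  exact (measurable_id.abs) measurableSet_Icc

lemma absSet_subset {u v : ℝ} (hv : v ≤ 1) : {x : ℝ | u ≤ |x| ∧ |x| ≤ v} ⊆ Icc (-1 : ℝ) 1 := by
  intro x hx
  have h := hx.2
  have h1 : |x| ≤ 1 := h.trans hv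
  exact abs_le.mp h1

lemma vol_absSet {u v : ℝ} (huv : u ≤ v) :
    volume {x : ℝ | u ≤ |x| ∧ |x| ≤ v} = ENNReal.ofReal (2 * (max v 0 - max u 0)) := by
  rcases lt_or_ge v 0 with hv0 | hv0
  · have hempty : {x : ℝ | u ≤ |x| ∧ |x| ≤ v} = ∅ := by
      ext x
      simp only [mem_setOf_eq, mem_empty_iff_false, iff_false, not_and, not_le]
      intro _
      exact lt_of_lt_of_le hv0 (abs_nonneg x)
    rw [hempty, measure_empty, max_eq_right hv0.le, max_eq_right (huv.trans hv0.le)]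
    simp
  · rcases le_or_gt u 0 with hu0 | hu0
    · have hS : {x : ℝ | u ≤ |x| ∧ |x| ≤ v} = Icc (-v) v := by
        ext x
        simp only [mem_setOf_eq, mem_Icc, ← abs_le]
        exact ⟨fun h => h.2, fun h => ⟨hu0.trans (abs_nonneg x), h⟩⟩
      rw [hS, Real.volume_Icc, max_eq_left hv0, max_eq_right hu0]
      congr 1; ring
    · have hS : {x : ℝ | u ≤ |x| ∧ |x| ≤ v} = Icc (-v) v \ Ioo (-u) u := by
        ext x
        simp only [mem_setOf_eq, mem_diff, mem_Icc, mem_Ioo]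
        constructor
        · rintro ⟨h1x, h2x⟩
          refine ⟨abs_le.mp h2x, fun hc => ?_⟩
          have : |x| < u := abs_lt.mpr hc
          linarith
        · rintro ⟨hx, hnx⟩
          refine ⟨?_, abs_le.mpr hx⟩
          by_contra h
          push_neg at h
          exact hnx (abs_lt.mp h)
      have hsub : Ioo (-u) u ⊆ Icc (-v) v := fun x hx =>
        ⟨by rcases hx with ⟨h, _⟩; linarith, by rcases hx with ⟨_, h⟩; linarith⟩
      rw [hS, measure_diff hsub measurableSet_Ioo.nullMeasurableSet
        (by rw [Real.volume_Ioo]; exact ENNReal.ofReal_ne_top)]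
      rw [Real.volume_Icc, Real.volume_Ioo, ← ENNReal.ofReal_sub _ (by linarith),
        max_eq_left hv0, max_eq_left hu0.le]
      congr 1; ring

lemma Pm_absSet {u v : ℝ} (huv : u ≤ v) (hv : v ≤ 1) :
    Pm {x : ℝ | u ≤ |x| ∧ |x| ≤ v} = ENNReal.ofReal (max v 0 - max u 0) := by
  rw [Pm_apply _ (absSet_measurable u v), inter_eq_left.mpr (absSet_subset hv),
    vol_absSet huv]
  rw [show (2 : ℝ) * (max v 0 - max u 0) = 2 * (max v 0 - max u 0) from rfl,
    ENNReal.ofReal_mul (by norm_num : (0:ℝ) ≤ 2)]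
  rw [← mul_assoc, show ENNReal.ofReal (2:ℝ) = (2 : ENNReal) by norm_num,
    ENNReal.inv_mul_cancel two_ne_zero ENNReal.ofNat_ne_top, one_mul]

/-- The conditional expectation as a function of the first coordinate. -/
noncomputable def gfun (y1 y2 : ℝ) (x : ℝ) : ℝ :=
  if 0 ≤ x then max y2 0 - max y1 0 else max (-y1) 0 - max (-y2) 0

lemma gfun_measurable (y1 y2 : ℝ) : Measurable (gfun y1 y2) :=
  Measurable.ite measurableSet_Ici measurable_const measurable_const

lemma fiber (y1 y2 : ℝ) (h1 : -1 ≤ y1) (h12 : y1 ≤ y2) (h2 : y2 ≤ 1) (x : ℝ) :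
    ∫ y, indC (Icc y1 y2) (x, y) ∂Pm = gfun y1 y2 x := by
  by_cases hx : 0 ≤ x
  · have hpt : (fun y => indC (Icc y1 y2) (x, y)) =
        ({z : ℝ | y1 ≤ |z| ∧ |z| ≤ y2}).indicator 1 := by
      funext y
      simp only [indC, Ymod, sgn, if_pos hx, one_mul, indicator_apply, mem_Icc,
        mem_setOf_eq, Pi.one_apply]
    rw [hpt, integral_indicator_one (absSet_measurable y1 y2), measureReal_def, Pm_absSet h12 h2,
      ENNReal.toReal_ofReal (by simp only [sub_nonneg]; exact max_le_max h12 le_rfl)]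
    simp [gfun, hx]
  · have hpt : (fun y => indC (Icc y1 y2) (x, y)) =
        ({z : ℝ | -y2 ≤ |z| ∧ |z| ≤ -y1}).indicator 1 := by
      funext y
      simp only [indC, Ymod, sgn, if_neg hx, indicator_apply, mem_Icc, mem_setOf_eq,
        Pi.one_apply, neg_one_mul]
      have : (y1 ≤ -|y| ∧ -|y| ≤ y2) ↔ (-y2 ≤ |y| ∧ |y| ≤ -y1) := by
        constructor <;> rintro ⟨h, h'⟩ <;> constructor <;> linarith
      rw [if_congr this rfl rfl]
    rw [hpt, integral_indicator_one (absSet_measurable (-y2) (-y1)), measureReal_def,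
      Pm_absSet (by linarith) (by linarith),
      ENNReal.toReal_ofReal (by simp only [sub_nonneg]; exact max_le_max (by linarith) le_rfl)]
    simp [gfun, hx]

lemma Pm_Ici : (Pm (Ici (0:ℝ))).toReal = 1/2 := by
  have h : Ici (0:ℝ) ∩ Icc (-1 : ℝ) 1 = Icc (0:ℝ) 1 := by
    ext x; simp only [mem_inter_iff, mem_Ici, mem_Icc]
    exact ⟨fun ⟨h, _, h2⟩ => ⟨h, h2⟩, fun ⟨h, h2⟩ => ⟨h, by linarith, h2⟩⟩
  rw [Pm_apply _ measurableSet_Ici, h, Real.volume_Icc]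
  norm_num

lemma Pm_Iio : (Pm (Iio (0:ℝ))).toReal = 1/2 := by
  have h : Iio (0:ℝ) ∩ Icc (-1 : ℝ) 1 = Ico (-1 : ℝ) 0 := by
    ext x; simp only [mem_inter_iff, mem_Iio, mem_Icc, mem_Ico]
    exact ⟨fun ⟨h, h1, _⟩ => ⟨h1, h⟩, fun ⟨h1, h⟩ => ⟨h, h1, by linarith⟩⟩
  rw [Pm_apply _ measurableSet_Iio, h, Real.volume_Ico]
  norm_num

lemma intg (c d : ℝ) : ∫ x, (if 0 ≤ x then c else d) ∂Pm = (c + d) / 2 := by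
  have hfun : (fun x : ℝ => if 0 ≤ x then c else d) =
      fun x => (Ici (0:ℝ)).indicator (fun _ => c) x + (Iio (0:ℝ)).indicator (fun _ => d) x := by
    funext x
    by_cases h : 0 ≤ x
    · simp [indicator_apply, h, not_lt.mpr h]
    · simp [indicator_apply, h, not_le.mp h]
  rw [hfun, integral_add ((integrable_const c).indicator measurableSet_Ici)
      ((integrable_const d).indicator measurableSet_Iio),
    integral_indicator_const c measurableSet_Ici,
    integral_indicator_const d measurableSet_Iio, measureReal_def, measureReal_def, Pm_Ici, Pm_Iio]
  simp only [smul_eq_mul]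
  ring

lemma Ymod_measurable : Measurable Ymod := by
  have hsgn : Measurable sgn :=
    Measurable.ite measurableSet_Ici measurable_const measurable_const
  exact (hsgn.comp measurable_fst).mul measurable_snd.abs

lemma indC_eq (C : Set ℝ) : indC C = (Ymod ⁻¹' C).indicator 1 := by
  funext ω
  unfold indC
  by_cases h : Ymod ω ∈ C
  · rw [indicator_of_mem h, indicator_of_mem (by exact h)]; rfl
  · rw [indicator_of_notMem h, indicator_of_notMem (by exact h)]

lemma indC_integrable {C : Set ℝ} (hC : MeasurableSet C) : Integrable (indC C) unifSq := by
  rw [indC_eq]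
  exact (integrable_const (1:ℝ)).indicator (Ymod_measurable hC)

lemma integral_comp_fst (h : ℝ → ℝ) (hh : Measurable h) :
    ∫ ω : ℝ × ℝ, h ω.1 ∂(Pm.prod Pm) = ∫ x, h x ∂Pm := by
  have hmap : Measure.map Prod.fst (Pm.prod Pm) = Pm := by
    rw [Measure.map_fst_prod, measure_univ, one_smul]
  rw [← hmap, integral_map measurable_fst.aemeasurable]
  rw [hmap]
  exact hh.aestronglyMeasurable

lemma gfun_bound (y1 y2 : ℝ) (h1 : -1 ≤ y1) (h12 : y1 ≤ y2) (h2 : y2 ≤ 1) (x : ℝ) :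
    ‖gfun y1 y2 x‖ ≤ 2 := by
  have b1 : max y2 0 ≤ 1 := max_le h2 zero_le_one
  have b2 : max y1 0 ≤ 1 := max_le (h12.trans h2) zero_le_one
  have b3 : max (-y1) 0 ≤ 1 := max_le (by linarith) zero_le_one
  have b4 : max (-y2) 0 ≤ 1 := max_le (by linarith) zero_le_one
  have n1 : (0:ℝ) ≤ max y2 0 := le_max_right _ _
  have n2 : (0:ℝ) ≤ max y1 0 := le_max_right _ _
  have n3 : (0:ℝ) ≤ max (-y1) 0 := le_max_right _ _
  have n4 : (0:ℝ) ≤ max (-y2) 0 := le_max_right _ _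
  rw [Real.norm_eq_abs]
  unfold gfun
  split_ifs <;> rw [abs_le] <;> constructor <;> linarith

lemma max_add_max_neg (x : ℝ) : max x 0 + max (-x) 0 = |x| := by
  rcases le_total 0 x with h | h
  · rw [max_eq_left h, max_eq_right (neg_nonpos.mpr h), abs_of_nonneg h, add_zero]
  · rw [max_eq_right h, max_eq_left (neg_nonneg.mpr h), abs_of_nonpos h, zero_add]

lemma variance_congr' {Ω : Type*} {m : MeasurableSpace Ω} {μ : Measure Ω} {f g : Ω → ℝ}
    (h : f =ᵐ[μ] g) : variance f μ = variance g μ := by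
  unfold variance evariance
  rw [integral_congr_ae h, lintegral_congr_ae (h.mono fun x hx => by rw [hx])]

/-- The sub-σ-algebra generated by the first coordinate. -/
noncomputable def mFst : MeasurableSpace (ℝ × ℝ) := MeasurableSpace.comap Prod.fst inferInstance

lemma mFst_le : mFst ≤ (inferInstance : MeasurableSpace (ℝ × ℝ)) := measurable_fst.comap_le

theorem stmt9 (y1 y2 : ℝ) (h1 : -1 ≤ y1) (h12 : y1 < y2) (h2 : y2 ≤ 1) :
    variance
      (unifSq[indC (Icc y1 y2) | MeasurableSpace.comap Prod.fst inferInstance])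
      unifSq = (|y2| - |y1|) ^ 2 / 4 := by
  show variance (unifSq[indC (Icc y1 y2) | mFst]) unifSq = (|y2| - |y1|) ^ 2 / 4
  haveI : IsFiniteMeasure (unifSq.trim mFst_le) := isFiniteMeasure_trim mFst_le
  set G : ℝ × ℝ → ℝ := fun ω => gfun y1 y2 ω.1 with hG_def
  have hGm : Measurable G := (gfun_measurable y1 y2).comp measurable_fst
  have hG_bdd : ∀ ω : ℝ × ℝ, ‖G ω‖ ≤ 2 := fun ω => gfun_bound y1 y2 h1 h12.le h2 ω.1
  have hmem : MemLp G 2 unifSq :=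
    MemLp.of_bound hGm.aestronglyMeasurable 2 (Filter.Eventually.of_forall hG_bdd)
  have hG_int : Integrable G unifSq :=
    (MemLp.of_bound hGm.aestronglyMeasurable 2
      (Filter.Eventually.of_forall hG_bdd) : MemLp G 1 unifSq).integrable le_rfl
  have hf_int : Integrable (indC (Icc y1 y2)) unifSq := indC_integrable measurableSet_Icc
  -- G is a version of the conditional expectation
  have hkey : G =ᵐ[unifSq] unifSq[indC (Icc y1 y2) | mFst] := by
    refine ae_eq_condExp_of_forall_setIntegral_eq mFst_le hf_int
      (fun s _ _ => hG_int.integrableOn) (fun s hs _ => ?_) ?_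
    · rcases hs with ⟨t, ht, rfl⟩
      have hpre : Prod.fst ⁻¹' t = t ×ˢ (univ : Set ℝ) := prod_univ.symm
      rw [unifSq_eq] at hG_int hf_int ⊢
      rw [hpre, setIntegral_prod _ hG_int.integrableOn,
        setIntegral_prod _ hf_int.integrableOn]
      refine setIntegral_congr_fun ht fun x _ => ?_
      simp only [Measure.restrict_univ]
      rw [fiber y1 y2 h1 h12.le h2 x]
      simp [hG_def]
    · refine StronglyMeasurable.aestronglyMeasurable ?_
      have hfst : Measurable[mFst] (Prod.fst : ℝ × ℝ → ℝ) := fun s hs => ⟨s, hs, rfl⟩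
      exact ((gfun_measurable y1 y2).comp hfst).stronglyMeasurable
  rw [← variance_congr' hkey]
  set a := max y2 0 - max y1 0 with ha_def
  set b := max (-y1) 0 - max (-y2) 0 with hb_def
  rw [variance_eq_sub hmem]
  have hGint : ∫ ω, G ω ∂unifSq = (a + b) / 2 := by
    rw [unifSq_eq, integral_comp_fst _ (gfun_measurable y1 y2)]
    exact intg a b
  have hG2 : ∫ ω, (G ^ 2) ω ∂unifSq = (a ^ 2 + b ^ 2) / 2 := by
    have hsq : (fun ω : ℝ × ℝ => (G ^ 2) ω) =
        fun ω : ℝ × ℝ => (fun x => if 0 ≤ x then a ^ 2 else b ^ 2) ω.1 := by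
      funext ω
      simp only [Pi.pow_apply, hG_def, gfun]
      split_ifs <;> rfl
    rw [hsq, unifSq_eq,
      integral_comp_fst _ (Measurable.ite measurableSet_Ici measurable_const measurable_const),
      intg]
  rw [show unifSq[G ^ 2] = ∫ ω, (G ^ 2) ω ∂unifSq from rfl,
    show unifSq[G] = ∫ ω, G ω ∂unifSq from rfl, hGint, hG2]
  have hab : a - b = |y2| - |y1| := by
    have e1 := max_add_max_neg y1
    have e2 := max_add_max_neg y2
    rw [ha_def, hb_def]
    linarith
  have : (a ^ 2 + b ^ 2) / 2 - ((a + b) / 2) ^ 2 = (a - b) ^ 2 / 4 := by ring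
  rw [this, hab]
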